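/- If e ∈ Win_a([p,q]^∧_a) in the weak spectroscopy energy game G△, then there exists a conjunct ψ ∈ Strat([p,q]^∧_a, e) with expr^∧(ψ) ≤ e. -/

import Mathlib

open Classical

noncomputable section

namespace Spectroscopy

/-! ### Energies and declining energy games -/

/-- Energies: 8-dimensional vectors over `ℕ ∪ {∞}`, ordered componentwise. -/
abbrev Energy : Type := Fin 8 → ℕ∞

/-- The `i`-th unit vector. -/
def unitE (i : Fin 8) : Energy := fun k => if k = i then 1 else 0

/-- The vector with value `v` at position `i` and `0` elsewhere. -/
def onlyAt (i : Fin 8) (v : ℕ∞) : Energy := fun k => if k = i then v else 0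

/-- Components of energy updates: `-1`, `0`, or minimum selection `min_D`.
For the component at position `k`, `minWith D` selects the minimum over the
positions `{k} ∪ D`, so the requirement `k ∈ D` of the paper holds by
construction. -/
inductive UpdComp : Type
  | decr : UpdComp
  | zero : UpdComp
  | minWith (D : Finset (Fin 8)) : UpdComp
deriving DecidableEq

/-- Energy updates. -/
abbrev Update : Type := Fin 8 → UpdComp

/-- Partial application of an update to an energy (`none` when a component
would become negative). -/
def upd (e : Energy) (u : Update) : Option Energy :=
  if ∀ k, u k = UpdComp.decr → e k ≠ 0 then
    some (fun k =>
      match u k with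
      | UpdComp.decr => e k - 1
      | UpdComp.zero => e k
      | UpdComp.minWith D => (insert k D).inf e)
  else none

/-- A declining energy game: positions, a defender predicate (attacker
positions are the non-defender ones), and moves labeled with updates. -/
structure EGame (Pos : Type) where
  defender : Pos → Prop
  move : Pos → Update → Pos → Prop

/-- Attacker winning budgets `Win_a`: at an attacker position some move must
lead to an attacker-won position under the updated energy; at a defender
position every move must (be defined and) lead to an attacker-won position. -/
inductive EGame.Win {Pos : Type} (G : EGame Pos) : Pos → Energy → Prop
  | attack {g : Pos} {u : Update} {g' : Pos} {e e' : Energy} :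
      ¬ G.defender g → G.move g u g' → upd e u = some e' → G.Win g' e' →
      G.Win g e
  | defend {g : Pos} {e : Energy} :
      G.defender g →
      (∀ u g', G.move g u g' → upd e u ≠ none) →
      (∀ u g' e', G.move g u g' → upd e u = some e' → G.Win g' e') →
      G.Win g e

/-! ### Labeled transition systems with silent steps -/

section LTS

variable {Proc Act : Type}

/-- Weak internal steps `↠`: reflexive-transitive closure of `τ`-steps. -/
def Star (Tr : Proc → Act → Proc → Prop) (τ : Act) : Proc → Proc → Prop :=
  Relation.ReflTransGen fun p p' => Tr p τ p'

/-- A process is stable if it has no `τ`-step. -/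
def Stable (Tr : Proc → Act → Proc → Prop) (τ : Act) (p : Proc) : Prop :=
  ∀ p', ¬ Tr p τ p'

/-- Optional step `p →(α) p'`: a real `α`-step, or `α = τ` and `p = p'`. -/
def OptStep (Tr : Proc → Act → Proc → Prop) (τ : Act) (p : Proc) (α : Act) (p' : Proc) : Prop :=
  Tr p α p' ∨ (α = τ ∧ p = p')

/-- Lift of `→a` to sets. -/
def SetStep (Tr : Proc → Act → Proc → Prop) (Q : Set Proc) (a : Act) (Q' : Set Proc) : Prop :=
  Q' = {q' | ∃ q ∈ Q, Tr q a q'}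

/-- Lift of `↠` to sets. -/
def SetStar (Tr : Proc → Act → Proc → Prop) (τ : Act) (Q Q' : Set Proc) : Prop :=
  Q' = {q' | ∃ q ∈ Q, Star Tr τ q q'}

/-- Lift of `→(α)` to sets. -/
def SetOpt (Tr : Proc → Act → Proc → Prop) (τ : Act) (Q : Set Proc) (α : Act)
    (Q' : Set Proc) : Prop :=
  Q' = {q' | ∃ q ∈ Q, OptStep Tr τ q α q'}

end LTS

/-! ### The logic HML_srbb -/

mutual
/-- Formulas `φ` of HML_srbb: `⟨ε⟩χ` or immediate conjunctions `⋀Ψ`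
(conjunctions are indexed by an arbitrary type). `⊤` is the empty conjunction. -/
inductive Formula (Act : Type) (τ : Act) : Type 1
  | delayed : DFormula Act τ → Formula Act τ
  | conj : (I : Type) → (I → Conjunct Act τ) → Formula Act τ

/-- Delayed formulas `χ`: observations `⟨a⟩φ` (with `a ≠ τ`), standard
conjunctions `⋀Ψ`, stable conjunctions `⋀({¬⟨τ⟩⊤} ∪ Ψ)`, and branching
conjunctions `⋀({(α)φ} ∪ Ψ)`. -/
inductive DFormula (Act : Type) (τ : Act) : Type 1
  | obs : (a : Act) → a ≠ τ → Formula Act τ → DFormula Act τ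
  | conj : (I : Type) → (I → Conjunct Act τ) → DFormula Act τ
  | stableConj : (I : Type) → (I → Conjunct Act τ) → DFormula Act τ
  | branchConj : (α : Act) → Formula Act τ → (I : Type) → (I → Conjunct Act τ) → DFormula Act τ

/-- Conjuncts `ψ`: positive `⟨ε⟩χ` or negative `¬⟨ε⟩χ`. -/
inductive Conjunct (Act : Type) (τ : Act) : Type 1
  | pos : DFormula Act τ → Conjunct Act τ
  | neg : DFormula Act τ → Conjunct Act τ
end

section Semantics

variable {Proc Act : Type}

mutual
/-- Semantics `⟦φ⟧`. -/
def Sat (Tr : Proc → Act → Proc → Prop) (τ : Act) (p : Proc) : Formula Act τ → Prop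
  | .delayed χ => ∃ p', Star Tr τ p p' ∧ SatD Tr τ p' χ
  | .conj _ ps => ∀ i, SatC Tr τ p (ps i)

/-- Semantics `⟦χ⟧^ε` of delayed formulas. -/
def SatD (Tr : Proc → Act → Proc → Prop) (τ : Act) (p : Proc) : DFormula Act τ → Prop
  | .obs a _ φ => ∃ p', Tr p a p' ∧ Sat Tr τ p' φ
  | .conj _ ps => ∀ i, SatC Tr τ p (ps i)
  | .stableConj _ ps => Stable Tr τ p ∧ ∀ i, SatC Tr τ p (ps i)
  | .branchConj α φ _ ps =>
      (∃ p', OptStep Tr τ p α p' ∧ Sat Tr τ p' φ) ∧ ∀ i, SatC Tr τ p (ps i)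

/-- Semantics `⟦ψ⟧^∧` of conjuncts. -/
def SatC (Tr : Proc → Act → Proc → Prop) (τ : Act) (p : Proc) : Conjunct Act τ → Prop
  | .pos χ => ∃ p', Star Tr τ p p' ∧ SatD Tr τ p' χ
  | .neg χ => ¬ ∃ p', Star Tr τ p p' ∧ SatD Tr τ p' χ
end

/-- `φ` distinguishes `p` from the set `Q`. -/
def Distinguishes (Tr : Proc → Act → Proc → Prop) (τ : Act) (φ : Formula Act τ)
    (p : Proc) (Q : Set Proc) : Prop :=
  Sat Tr τ p φ ∧ ∀ q ∈ Q, ¬ Sat Tr τ q φ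

/-- The delayed formula `χ` distinguishes `p` from the set `Q` w.r.t. `⟦·⟧^ε`. -/
def DistinguishesD (Tr : Proc → Act → Proc → Prop) (τ : Act) (χ : DFormula Act τ)
    (p : Proc) (Q : Set Proc) : Prop :=
  SatD Tr τ p χ ∧ ∀ q ∈ Q, ¬ SatD Tr τ q χ

/-- The conjunct `ψ` distinguishes `p` from `q` w.r.t. `⟦·⟧^∧`. -/
def DistinguishesC (Tr : Proc → Act → Proc → Prop) (τ : Act) (ψ : Conjunct Act τ)
    (p q : Proc) : Prop :=
  SatC Tr τ p ψ ∧ ¬ SatC Tr τ q ψ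

/-- Stability-respecting branching bisimulations: symmetric relations with the
branching-bisimulation transfer property and the stability-respecting
property. -/
def IsSRBBisim (Tr : Proc → Act → Proc → Prop) (τ : Act) (R : Proc → Proc → Prop) : Prop :=
  Symmetric R ∧
  (∀ p q, R p q → ∀ α p', Tr p α p' →
    (α = τ ∧ R p' q) ∨
      ∃ q' q'', Star Tr τ q q' ∧ Tr q' α q'' ∧ R p q' ∧ R p' q'') ∧
  (∀ p q, R p q → Stable Tr τ p →
    ∃ q', Star Tr τ q q' ∧ Stable Tr τ q' ∧ R p q')

end Semantics

/-! ### Expressiveness prices -/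

section Expr

variable {Act : Type} {τ : Act}

mutual
/-- Expressiveness price `expr` of formulas. -/
def exprF : Formula Act τ → Energy
  | .delayed χ => exprE χ
  | .conj I ps => ⨆ _ : Nonempty I, ((unitE 4 + unitE 2) + ⨆ i, exprC (ps i))

/-- Expressiveness price `expr^ε` of delayed formulas. -/
def exprE : DFormula Act τ → Energy
  | .obs _ _ φ => unitE 0 + exprF φ
  | .conj I ps => ⨆ _ : Nonempty I, (unitE 2 + ⨆ i, exprC (ps i))
  | .stableConj _ ps => unitE 3 + ⨆ i, exprC (ps i)
  | .branchConj _ φ _ ps =>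
      (unitE 1 + unitE 2) +
        (((unitE 0 + exprF φ) ⊔ onlyAt 5 (1 + exprF φ 0)) ⊔ ⨆ i, exprC (ps i))

/-- Expressiveness price `expr^∧` of conjuncts. -/
def exprC : Conjunct Act τ → Energy
  | .pos χ => exprE χ ⊔ onlyAt 5 (exprE χ 0)
  | .neg χ => (unitE 7 + exprE χ) ⊔ onlyAt 6 (exprE χ 0)
end

end Expr

/-! ### The weak spectroscopy energy game -/

/-- Positions of the weak spectroscopy game. -/
inductive GPos (Proc Act : Type) : Type
  | att (p : Proc) (Q : Set Proc)                                 -- `[p,Q]_a`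
  | attD (p : Proc) (Q : Set Proc)                                -- `[p,Q]^ε_a`
  | attC (p q : Proc)                                             -- `[p,q]^∧_a`
  | attB (p : Proc) (Q : Set Proc)                                -- `[p,Q]^η_a`
  | defC (p : Proc) (Q : Set Proc)                                -- `(p,Q)_d`
  | defS (p : Proc) (Q : Set Proc)                                -- `(p,Q)^s_d`
  | defB (p : Proc) (α : Act) (p' : Proc) (Q Qa : Set Proc)       -- `(p,α,p',Q,Qa)^η_d`

/-- The zero update. -/
def zeroU : Update := fun _ => UpdComp.zero

/-- The update `-ê_i`. -/
def decU (i : Fin 8) : Update := fun k => if k = i then UpdComp.decr else UpdComp.zero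

/-- The update `(min_{1,6},0,0,0,0,0,0,0)`. -/
def minU16 : Update := fun k => if k = 0 then UpdComp.minWith {5} else UpdComp.zero

/-- The update `(min_{1,7},0,0,0,0,0,0,-1)`. -/
def minU17dec8 : Update := fun k =>
  if k = 0 then UpdComp.minWith {6} else if k = 7 then UpdComp.decr else UpdComp.zero

/-- The update `(0,-1,-1,0,0,0,0,0)`. -/
def dec23 : Update := fun k => if k = 1 ∨ k = 2 then UpdComp.decr else UpdComp.zero

/-- The update `(min_{1,6},-1,-1,0,0,0,0,0)`. -/
def minU16dec23 : Update := fun k =>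
  if k = 0 then UpdComp.minWith {5}
  else if k = 1 ∨ k = 2 then UpdComp.decr else UpdComp.zero

section Game

variable {Proc Act : Type}

/-- Moves of the weak spectroscopy game. -/
inductive GMove (Tr : Proc → Act → Proc → Prop) (τ : Act) :
    GPos Proc Act → Update → GPos Proc Act → Prop
  | delay {p : Proc} {Q Q' : Set Proc} :
      SetStar Tr τ Q Q' →
      GMove Tr τ (.att p Q) zeroU (.attD p Q')
  | procrastination {p p' : Proc} {Q : Set Proc} :
      Tr p τ p' → p ≠ p' →
      GMove Tr τ (.attD p Q) zeroU (.attD p' Q)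
  | observation {p p' : Proc} {a : Act} {Q Q' : Set Proc} :
      Tr p a p' → a ≠ τ → SetStep Tr Q a Q' →
      GMove Tr τ (.attD p Q) (decU 0) (.att p' Q')
  | finishing {p : Proc} :
      GMove Tr τ (.att p ∅) zeroU (.defC p ∅)
  | immediateConj {p : Proc} {Q : Set Proc} :
      Q ≠ ∅ →
      GMove Tr τ (.att p Q) (decU 4) (.defC p Q)
  | lateConj {p : Proc} {Q : Set Proc} :
      GMove Tr τ (.attD p Q) zeroU (.defC p Q)
  | conjAnswer {p q : Proc} {Q : Set Proc} :
      q ∈ Q →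
      GMove Tr τ (.defC p Q) (decU 2) (.attC p q)
  | posConjunct {p q : Proc} {Q : Set Proc} :
      SetStar Tr τ {q} Q →
      GMove Tr τ (.attC p q) minU16 (.attD p Q)
  | negConjunct {p q : Proc} {Q : Set Proc} :
      SetStar Tr τ {p} Q → p ≠ q →
      GMove Tr τ (.attC p q) minU17dec8 (.attD q Q)
  | stableConj {p : Proc} {Q : Set Proc} :
      Stable Tr τ p →
      GMove Tr τ (.attD p Q) zeroU (.defS p {q ∈ Q | Stable Tr τ q})
  | conjStableAnswer {p q : Proc} {Q : Set Proc} :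
      q ∈ Q →
      GMove Tr τ (.defS p Q) (decU 3) (.attC p q)
  | stableFinishing {p : Proc} :
      GMove Tr τ (.defS p ∅) (decU 3) (.defC p ∅)
  | branchConj {p p' : Proc} {α : Act} {Q Qa : Set Proc} :
      OptStep Tr τ p α p' → Qa ⊆ Q →
      GMove Tr τ (.attD p Q) zeroU (.defB p α p' (Q \ Qa) Qa)
  | branchAnswer {p p' q : Proc} {α : Act} {Q Qa : Set Proc} :
      q ∈ Q →
      GMove Tr τ (.defB p α p' Q Qa) dec23 (.attC p q)
  | branchObservation {p p' : Proc} {α : Act} {Q Qa Q' : Set Proc} :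
      SetOpt Tr τ Qa α Q' →
      GMove Tr τ (.defB p α p' Q Qa) minU16dec23 (.attB p' Q')
  | branchAccounting {p : Proc} {Q : Set Proc} :
      GMove Tr τ (.attB p Q) (decU 0) (.att p Q)

/-- Defender positions of the weak spectroscopy game. -/
def isDefender : GPos Proc Act → Prop
  | .defC _ _ => True
  | .defS _ _ => True
  | .defB _ _ _ _ _ => True
  | _ => False

/-- The weak spectroscopy energy game `G△`. -/
def specGame (Tr : Proc → Act → Proc → Prop) (τ : Act) : EGame (GPos Proc Act) where
  defender := isDefender
  move := GMove Tr τ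

end Game

/-! ### Strategy formulas -/

section Strat

variable {Proc Act : Type}

mutual
/-- Attacker strategy formulas (formula sort). -/
inductive StratF (Tr : Proc → Act → Proc → Prop) (τ : Act) :
    GPos Proc Act → Energy → Formula Act τ → Prop
  | delay {p : Proc} {Q Q' : Set Proc} {u : Update} {e e' : Energy} {χ : DFormula Act τ} :
      GMove Tr τ (.att p Q) u (.attD p Q') →
      upd e u = some e' →
      (specGame Tr τ).Win (.attD p Q') e' →
      StratD Tr τ (.attD p Q') e' χ →
      StratF Tr τ (.att p Q) e (.delayed χ)
  | immediateConj {p : Proc} {Q : Set Proc} {u : Update} {e e' : Energy}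
      {I : Type} {ps : I → Conjunct Act τ} :
      GMove Tr τ (.att p Q) u (.defC p Q) →
      upd e u = some e' →
      (specGame Tr τ).Win (.defC p Q) e' →
      StratD Tr τ (.defC p Q) e' (.conj I ps) →
      StratF Tr τ (.att p Q) e (.conj I ps)

/-- Attacker strategy formulas (delayed-formula sort). -/
inductive StratD (Tr : Proc → Act → Proc → Prop) (τ : Act) :
    GPos Proc Act → Energy → DFormula Act τ → Prop
  | procrastination {p p' : Proc} {Q : Set Proc} {u : Update} {e e' : Energy}
      {χ : DFormula Act τ} :
      GMove Tr τ (.attD p Q) u (.attD p' Q) →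
      upd e u = some e' →
      (specGame Tr τ).Win (.attD p' Q) e' →
      StratD Tr τ (.attD p' Q) e' χ →
      StratD Tr τ (.attD p Q) e χ
  | observation {p p' : Proc} {a : Act} {Q Q' : Set Proc} {u : Update} {e e' : Energy}
      {φ : Formula Act τ} (ha : a ≠ τ) :
      GMove Tr τ (.attD p Q) u (.att p' Q') →
      Tr p a p' → SetStep Tr Q a Q' →
      upd e u = some e' →
      (specGame Tr τ).Win (.att p' Q') e' →
      StratF Tr τ (.att p' Q') e' φ →
      StratD Tr τ (.attD p Q) e (.obs a ha φ)
  | lateConj {p : Proc} {Q : Set Proc} {u : Update} {e e' : Energy} {χ : DFormula Act τ} :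
      GMove Tr τ (.attD p Q) u (.defC p Q) →
      upd e u = some e' →
      (specGame Tr τ).Win (.defC p Q) e' →
      StratD Tr τ (.defC p Q) e' χ →
      StratD Tr τ (.attD p Q) e χ
  | stable {p : Proc} {Q Q' : Set Proc} {u : Update} {e e' : Energy} {χ : DFormula Act τ} :
      GMove Tr τ (.attD p Q) u (.defS p Q') →
      upd e u = some e' →
      (specGame Tr τ).Win (.defS p Q') e' →
      StratD Tr τ (.defS p Q') e' χ →
      StratD Tr τ (.attD p Q) e χ
  | branch {p p' : Proc} {α : Act} {Q Q' Qa : Set Proc} {u : Update} {e e' : Energy}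
      {χ : DFormula Act τ} :
      GMove Tr τ (.attD p Q) u (.defB p α p' Q' Qa) →
      upd e u = some e' →
      (specGame Tr τ).Win (.defB p α p' Q' Qa) e' →
      StratD Tr τ (.defB p α p' Q' Qa) e' χ →
      StratD Tr τ (.attD p Q) e χ
  | conj {p : Proc} {Q : Set Proc} {e : Energy}
      (us : {q // q ∈ Q} → Update) (es : {q // q ∈ Q} → Energy)
      (ψs : {q // q ∈ Q} → Conjunct Act τ) :
      (∀ qq : {q // q ∈ Q}, GMove Tr τ (.defC p Q) (us qq) (.attC p qq.1)) →
      (∀ qq : {q // q ∈ Q}, upd e (us qq) = some (es qq)) →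
      (∀ qq : {q // q ∈ Q}, (specGame Tr τ).Win (.attC p qq.1) (es qq)) →
      (∀ qq : {q // q ∈ Q}, StratC Tr τ (.attC p qq.1) (es qq) (ψs qq)) →
      StratD Tr τ (.defC p Q) e (.conj {q // q ∈ Q} ψs)
  | stableConj {p : Proc} {Q : Set Proc} {e : Energy}
      (hne : Q.Nonempty)
      (us : {q // q ∈ Q} → Update) (es : {q // q ∈ Q} → Energy)
      (ψs : {q // q ∈ Q} → Conjunct Act τ) :
      (∀ qq : {q // q ∈ Q}, GMove Tr τ (.defS p Q) (us qq) (.attC p qq.1)) →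
      (∀ qq : {q // q ∈ Q}, upd e (us qq) = some (es qq)) →
      (∀ qq : {q // q ∈ Q}, (specGame Tr τ).Win (.attC p qq.1) (es qq)) →
      (∀ qq : {q // q ∈ Q}, StratC Tr τ (.attC p qq.1) (es qq) (ψs qq)) →
      StratD Tr τ (.defS p Q) e (.stableConj {q // q ∈ Q} ψs)
  | stableFinish {p : Proc} {u : Update} {e e' : Energy} :
      GMove Tr τ (.defS p ∅) u (.defC p ∅) →
      upd e u = some e' →
      (specGame Tr τ).Win (.defC p (∅ : Set Proc)) e' →
      StratD Tr τ (.defS p ∅) e (.stableConj Empty fun x => x.elim)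
  | branchConj {p p' : Proc} {α : Act} {Q Qa Q' : Set Proc} {ua ua' : Update}
      {e e1 ea : Energy} {φa : Formula Act τ}
      (us : {q // q ∈ Q} → Update) (es : {q // q ∈ Q} → Energy)
      (ψs : {q // q ∈ Q} → Conjunct Act τ) :
      GMove Tr τ (.defB p α p' Q Qa) ua (.attB p' Q') →
      GMove Tr τ (.attB p' Q') ua' (.att p' Q') →
      upd e ua = some e1 →
      upd e1 ua' = some ea →
      (specGame Tr τ).Win (.att p' Q') ea →
      StratF Tr τ (.att p' Q') ea φa →
      (∀ qq : {q // q ∈ Q}, GMove Tr τ (.defB p α p' Q Qa) (us qq) (.attC p qq.1)) →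
      (∀ qq : {q // q ∈ Q}, upd e (us qq) = some (es qq)) →
      (∀ qq : {q // q ∈ Q}, (specGame Tr τ).Win (.attC p qq.1) (es qq)) →
      (∀ qq : {q // q ∈ Q}, StratC Tr τ (.attC p qq.1) (es qq) (ψs qq)) →
      StratD Tr τ (.defB p α p' Q Qa) e (.branchConj α φa {q // q ∈ Q} ψs)

/-- Attacker strategy formulas (conjunct sort). -/
inductive StratC (Tr : Proc → Act → Proc → Prop) (τ : Act) :
    GPos Proc Act → Energy → Conjunct Act τ → Prop
  | pos {p q : Proc} {Q' : Set Proc} {u : Update} {e e' : Energy} {χ : DFormula Act τ} :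
      GMove Tr τ (.attC p q) u (.attD p Q') →
      upd e u = some e' →
      (specGame Tr τ).Win (.attD p Q') e' →
      StratD Tr τ (.attD p Q') e' χ →
      StratC Tr τ (.attC p q) e (.pos χ)
  | neg {p q : Proc} {P' : Set Proc} {u : Update} {e e' : Energy} {χ : DFormula Act τ} :
      GMove Tr τ (.attC p q) u (.attD q P') →
      upd e u = some e' →
      (specGame Tr τ).Win (.attD q P') e' →
      StratD Tr τ (.attD q P') e' χ →
      StratC Tr τ (.attC p q) e (.neg χ)
end

end Strat

/-! Induction on the derivation of `e ∈ Win_a(g)`, simultaneously for all positions and all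
sorts of formulas: the move that wins at an attacker position, or all moves at a defender
position, assemble the strategy formula, and the energy update of each move pays for what the
corresponding constructor adds to the price. A decrement of component `i` pays for `ê_i`, and
the `min_{1,6}` / `min_{1,7}` updates of the conjunct and branching-observation moves pay for
copying the first price component into component 6 or 7. -/

section Energy

def decrements (u : Update) : Energy := fun k => if u k = .decr then 1 else 0

lemma upd_eq_some_apply {e e' : Energy} {u : Update} (h : upd e u = some e') (k : Fin 8) :
    (u k = .decr → e k ≠ 0) ∧ e' k = match u k with
      | .decr => e k - 1
      | .zero => e k
      | .minWith D => (insert k D).inf e := by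
  unfold upd at h
  split_ifs at h with hdef
  cases h
  exact ⟨hdef k, rfl⟩

lemma decrements_add_le_of_upd {e e' : Energy} {u : Update} (h : upd e u = some e') :
    decrements u + e' ≤ e := by
  intro k
  obtain ⟨hdec, he'⟩ := upd_eq_some_apply h k
  simp only [Pi.add_apply, decrements, he']
  rcases hu : u k with _ | _ | D
  · simpa using (add_tsub_cancel_of_le (Order.one_le_iff_ne_zero.mpr (hdec hu))).le
  · simp
  · simp

lemma le_of_upd_minWith {e e' : Energy} {u : Update} (h : upd e u = some e') {k d : Fin 8}
    {D : Finset (Fin 8)} (hk : u k = .minWith D) (hd : d ∈ D) : e' k ≤ e d := by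
  rw [(upd_eq_some_apply h k).2, hk]
  exact Finset.inf_le (Finset.mem_insert_of_mem hd)

lemma eq_of_upd_zeroU {e e' : Energy} (h : upd e zeroU = some e') : e' = e := by
  simpa [upd, zeroU] using h.symm

lemma unitE_add_le_of_upd_decU {e e' : Energy} {i : Fin 8} (h : upd e (decU i) = some e') :
    unitE i + e' ≤ e := by
  convert decrements_add_le_of_upd h using 2
  ext k; simp [decrements, decU, unitE]

lemma le_of_upd_minU16 {e e' : Energy} (h : upd e minU16 = some e') : e' ≤ e ∧ e' 0 ≤ e 5 := by
  refine ⟨?_, le_of_upd_minWith h (by simp [minU16]) (Finset.mem_singleton_self 5)⟩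
  convert decrements_add_le_of_upd h
  ext k; fin_cases k <;> simp [decrements, minU16]

lemma add_le_of_upd_minU17dec8 {e e' : Energy} (h : upd e minU17dec8 = some e') :
    unitE 7 + e' ≤ e ∧ e' 0 ≤ e 6 := by
  refine ⟨?_, le_of_upd_minWith h (by simp [minU17dec8]) (Finset.mem_singleton_self 6)⟩
  convert decrements_add_le_of_upd h using 2
  ext k; fin_cases k <;> simp [decrements, minU17dec8, unitE]

lemma add_le_of_upd_dec23 {e e' : Energy} (h : upd e dec23 = some e') :
    unitE 1 + unitE 2 + e' ≤ e := by
  convert decrements_add_le_of_upd h using 2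
  ext k; fin_cases k <;> simp [decrements, dec23, unitE]

lemma add_le_of_upd_minU16dec23 {e e' : Energy} (h : upd e minU16dec23 = some e') :
    unitE 1 + unitE 2 + e' ≤ e ∧ e' 0 ≤ e 5 := by
  refine ⟨?_, le_of_upd_minWith h (by simp [minU16dec23]) (Finset.mem_singleton_self 5)⟩
  convert decrements_add_le_of_upd h using 2
  ext k; fin_cases k <;> simp [decrements, minU16dec23, unitE]

lemma add_iSup_le {κ : Type*} {ι : Sort*} {a e : κ → ℕ∞} {f : ι → κ → ℕ∞} (ha : a ≤ e)
    (h : ∀ i, a + f i ≤ e) : a + ⨆ i, f i ≤ e := by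
  intro k
  rcases isEmpty_or_nonempty ι with hι | hι
  · simpa using ha k
  · simp only [Pi.add_apply, iSup_apply, ENat.add_iSup]
    exact iSup_le fun i => h i k

lemma add_sup_le {κ : Type*} {a b c e : κ → ℕ∞} (hb : a + b ≤ e) (hc : a + c ≤ e) :
    a + (b ⊔ c) ≤ e := by
  intro k
  simp only [Pi.add_apply, Pi.sup_apply, add_max]
  exact max_le (hb k) (hc k)

lemma onlyAt_le {i : Fin 8} {v : ℕ∞} {e : Energy} (h : v ≤ e i) : onlyAt i v ≤ e := by
  intro k
  by_cases hk : k = i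
  · subst hk; simpa [onlyAt] using h
  · simp [onlyAt, hk]

lemma add_onlyAt_le {a e : Energy} {i : Fin 8} {v : ℕ∞} (ha : a ≤ e) (hai : a i = 0)
    (hv : v ≤ e i) : a + onlyAt i v ≤ e := by
  intro k
  by_cases hk : k = i
  · subst hk; simpa [onlyAt, hai] using hv
  · simpa [onlyAt, hk] using ha k

end Energy

section Price

variable {Act : Type} {τ : Act}

lemma exprC_pos_le {χ : DFormula Act τ} {e e' : Energy} (hχ : exprE χ ≤ e') (hle : e' ≤ e)
    (h5 : e' 0 ≤ e 5) : exprC (.pos χ) ≤ e :=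
  sup_le (hχ.trans hle) (onlyAt_le ((hχ 0).trans h5))

lemma exprC_neg_le {χ : DFormula Act τ} {e e' : Energy} (hχ : exprE χ ≤ e')
    (hle : unitE 7 + e' ≤ e) (h6 : e' 0 ≤ e 6) : exprC (.neg χ) ≤ e :=
  sup_le ((add_le_add_right hχ _).trans hle) (onlyAt_le ((hχ 0).trans h6))

lemma exprE_conj_le {I : Type} {ps : I → Conjunct Act τ} {e : Energy}
    (h : ∀ i, unitE 2 + exprC (ps i) ≤ e) : exprE (.conj I ps) ≤ e :=
  iSup_le fun ⟨i⟩ => add_iSup_le (le_self_add.trans (h i)) h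

lemma exprF_conj_le {I : Type} {ps : I → Conjunct Act τ} {e : Energy}
    (h : Nonempty I → unitE 4 + exprE (.conj I ps) ≤ e) : exprF (.conj I ps) ≤ e := by
  rw [exprF]
  refine iSup_le fun hI => le_trans ?_ (h hI)
  rw [exprE, add_assoc]
  exact add_le_add_right (le_iSup (fun _ : Nonempty I => unitE 2 + ⨆ i, exprC (ps i)) hI) _

lemma exprE_stableConj_le {I : Type} {ps : I → Conjunct Act τ} {e : Energy} (h3 : unitE 3 ≤ e)
    (h : ∀ i, unitE 3 + exprC (ps i) ≤ e) : exprE (.stableConj I ps) ≤ e :=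
  add_iSup_le h3 h

lemma exprE_branchConj_le {α : Act} {φ : Formula Act τ} {I : Type} {ps : I → Conjunct Act τ}
    {e : Energy} (hφ : unitE 1 + unitE 2 + (unitE 0 + exprF φ) ≤ e) (h5 : 1 + exprF φ 0 ≤ e 5)
    (hψ : ∀ i, unitE 1 + unitE 2 + exprC (ps i) ≤ e) : exprE (.branchConj α φ I ps) ≤ e := by
  have h12 : unitE 1 + unitE 2 ≤ e := le_self_add.trans hφ
  exact add_sup_le (add_sup_le hφ (add_onlyAt_le h12 (by simp [unitE]) h5)) (add_iSup_le h12 hψ)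

end Price

section Strategy

variable {Proc Act : Type} {Tr : Proc → Act → Proc → Prop} {τ : Act}

/-- At `[p,Q]^η_a` the formula is the one for the accounting successor `[p,Q]_a`, because the
branching-conjunction rule takes both moves `(…)^η_d ↣ [p,Q]^η_a ↣ [p,Q]_a` at once. -/
def StratWithinBudget (Tr : Proc → Act → Proc → Prop) (τ : Act) :
    GPos Proc Act → Energy → Prop
  | .att p Q, e => ∃ φ : Formula Act τ, StratF Tr τ (.att p Q) e φ ∧ exprF φ ≤ e
  | .attD p Q, e => ∃ χ : DFormula Act τ, StratD Tr τ (.attD p Q) e χ ∧ exprE χ ≤ e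
  | .attC p q, e => ∃ ψ : Conjunct Act τ, StratC Tr τ (.attC p q) e ψ ∧ exprC ψ ≤ e
  | .attB p Q, e => ∃ e', upd e (decU 0) = some e' ∧ (specGame Tr τ).Win (.att p Q) e' ∧
      ∃ φ : Formula Act τ, StratF Tr τ (.att p Q) e' φ ∧ exprF φ ≤ e'
  | .defC p Q, e => ∃ ps : {q // q ∈ Q} → Conjunct Act τ,
      StratD Tr τ (.defC p Q) e (.conj _ ps) ∧ exprE (.conj _ ps) ≤ e
  | .defS p Q, e => ∃ (I : Type) (ps : I → Conjunct Act τ),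
      StratD Tr τ (.defS p Q) e (.stableConj I ps) ∧ exprE (.stableConj I ps) ≤ e
  | .defB p α p' Q Qa, e => ∃ χ : DFormula Act τ,
      StratD Tr τ (.defB p α p' Q Qa) e χ ∧ exprE χ ≤ e

lemma stratWithinBudget_of_move {g g' : GPos Proc Act} {u : Update} {e e' : Energy}
    (hatt : ¬ isDefender g) (hmove : GMove Tr τ g u g') (hupd : upd e u = some e')
    (hwin : (specGame Tr τ).Win g' e') (ih : StratWithinBudget Tr τ g' e') :
    StratWithinBudget Tr τ g e := by
  cases hmove with
  | delay hQ =>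
    obtain rfl := eq_of_upd_zeroU hupd
    obtain ⟨χ, hst, hle⟩ := ih
    exact ⟨.delayed χ, .delay (.delay hQ) hupd hwin hst, hle⟩
  | procrastination htr hne =>
    obtain rfl := eq_of_upd_zeroU hupd
    obtain ⟨χ, hst, hle⟩ := ih
    exact ⟨χ, .procrastination (.procrastination htr hne) hupd hwin hst, hle⟩
  | observation htr ha hQ =>
    obtain ⟨φ, hst, hle⟩ := ih
    exact ⟨.obs _ ha φ, .observation ha (.observation htr ha hQ) htr hQ hupd hwin hst,
      (add_le_add_right hle _).trans (unitE_add_le_of_upd_decU hupd)⟩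
  | finishing =>
    obtain rfl := eq_of_upd_zeroU hupd
    obtain ⟨ps, hst, -⟩ := ih
    exact ⟨.conj _ ps, .immediateConj .finishing hupd hwin hst,
      exprF_conj_le fun ⟨q⟩ => q.2.elim⟩
  | immediateConj hQ =>
    obtain ⟨ps, hst, hle⟩ := ih
    exact ⟨.conj _ ps, .immediateConj (.immediateConj hQ) hupd hwin hst,
      exprF_conj_le fun _ => (add_le_add_right hle _).trans (unitE_add_le_of_upd_decU hupd)⟩
  | lateConj =>
    obtain rfl := eq_of_upd_zeroU hupd
    obtain ⟨ps, hst, hle⟩ := ih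
    exact ⟨.conj _ ps, .lateConj .lateConj hupd hwin hst, hle⟩
  | posConjunct hQ =>
    obtain ⟨χ, hst, hle⟩ := ih
    obtain ⟨hle', h5⟩ := le_of_upd_minU16 hupd
    exact ⟨.pos χ, .pos (.posConjunct hQ) hupd hwin hst, exprC_pos_le hle hle' h5⟩
  | negConjunct hQ hne =>
    obtain ⟨χ, hst, hle⟩ := ih
    obtain ⟨hle', h6⟩ := add_le_of_upd_minU17dec8 hupd
    exact ⟨.neg χ, .neg (.negConjunct hQ hne) hupd hwin hst, exprC_neg_le hle hle' h6⟩
  | stableConj hp =>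
    obtain rfl := eq_of_upd_zeroU hupd
    obtain ⟨I, ps, hst, hle⟩ := ih
    exact ⟨.stableConj I ps, .stable (.stableConj hp) hupd hwin hst, hle⟩
  | branchConj hp hQa =>
    obtain rfl := eq_of_upd_zeroU hupd
    obtain ⟨χ, hst, hle⟩ := ih
    exact ⟨χ, .branch (.branchConj hp hQa) hupd hwin hst, hle⟩
  | branchAccounting => exact ⟨e', hupd, hwin, ih⟩
  | conjAnswer _ | conjStableAnswer _ | stableFinishing | branchAnswer _
  | branchObservation _ => exact absurd trivial hatt

variable {p : Proc} {Q : Set Proc} {e : Energy}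

lemma stratWithinBudget_defC
    (step : ∀ u g', GMove Tr τ (.defC p Q) u g' →
      ∃ e', upd e u = some e' ∧ (specGame Tr τ).Win g' e' ∧ StratWithinBudget Tr τ g' e') :
    StratWithinBudget Tr τ (.defC p Q) e := by
  choose es hupd hwin ψs hst hle using fun q : {q // q ∈ Q} => step _ _ (.conjAnswer q.2)
  exact ⟨ψs, .conj _ es ψs (fun q => .conjAnswer q.2) hupd hwin hst,
    exprE_conj_le fun q => (add_le_add_right (hle q) _).trans (unitE_add_le_of_upd_decU (hupd q))⟩

lemma stratWithinBudget_defS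
    (step : ∀ u g', GMove Tr τ (.defS p Q) u g' →
      ∃ e', upd e u = some e' ∧ (specGame Tr τ).Win g' e' ∧ StratWithinBudget Tr τ g' e') :
    StratWithinBudget Tr τ (.defS p Q) e := by
  rcases Q.eq_empty_or_nonempty with rfl | hQ
  · obtain ⟨e', hupd, hwin, -⟩ := step _ _ .stableFinishing
    exact ⟨Empty, _, .stableFinish .stableFinishing hupd hwin,
      exprE_stableConj_le (le_self_add.trans (unitE_add_le_of_upd_decU hupd)) nofun⟩
  · choose es hupd hwin ψs hst hle using fun q : {q // q ∈ Q} => step _ _ (.conjStableAnswer q.2)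
    have hprice (q : {q // q ∈ Q}) : unitE 3 + exprC (ψs q) ≤ e :=
      (add_le_add_right (hle q) _).trans (unitE_add_le_of_upd_decU (hupd q))
    exact ⟨_, ψs, .stableConj hQ _ es ψs (fun q => .conjStableAnswer q.2) hupd hwin hst,
      exprE_stableConj_le (le_self_add.trans (hprice ⟨_, hQ.some_mem⟩)) hprice⟩

lemma stratWithinBudget_defB {α : Act} {p' : Proc} {Qa : Set Proc}
    (step : ∀ u g', GMove Tr τ (.defB p α p' Q Qa) u g' →
      ∃ e', upd e u = some e' ∧ (specGame Tr τ).Win g' e' ∧ StratWithinBudget Tr τ g' e') :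
    StratWithinBudget Tr τ (.defB p α p' Q Qa) e := by
  obtain ⟨e₁, hupd₁, -, eα, hupdα, hwinα, φ, hstφ, hleφ⟩ := step _ _ (.branchObservation rfl)
  choose es hupd hwin ψs hst hle using fun q : {q // q ∈ Q} => step _ _ (.branchAnswer q.2)
  obtain ⟨h12, h5⟩ := add_le_of_upd_minU16dec23 hupd₁
  have hα : unitE 0 + eα ≤ e₁ := unitE_add_le_of_upd_decU hupdα
  refine ⟨_, .branchConj _ es ψs (.branchObservation rfl) .branchAccounting hupd₁ hupdα hwinα
    hstφ (fun q => .branchAnswer q.2) hupd hwin hst, exprE_branchConj_le ?_ ?_ ?_⟩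
  · exact (add_le_add_right ((add_le_add_right hleφ _).trans hα) _).trans h12
  · calc 1 + exprF φ 0 ≤ (unitE 0 + eα) 0 := by simpa [unitE] using hleφ 0
      _ ≤ e 5 := (hα 0).trans h5
  · exact fun q => (add_le_add_right (hle q) _).trans (add_le_of_upd_dec23 (hupd q))

theorem stratWithinBudget_of_win {g : GPos Proc Act} (h : (specGame Tr τ).Win g e) :
    StratWithinBudget Tr τ g e := by
  induction h with
  | attack hatt hmove hupd hwin ih => exact stratWithinBudget_of_move hatt hmove hupd hwin ih
  | @defend g e hdef hdefined hwin ih =>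
    have step (u : Update) (g' : GPos Proc Act) (hmove : GMove Tr τ g u g') :
        ∃ e', upd e u = some e' ∧ (specGame Tr τ).Win g' e' ∧ StratWithinBudget Tr τ g' e' :=
      have ⟨e', hupd⟩ := Option.ne_none_iff_exists'.mp (hdefined u g' hmove)
      ⟨e', hupd, hwin u g' e' hmove hupd, ih u g' e' hmove hupd⟩
    cases g with
    | defC => exact stratWithinBudget_defC step
    | defS => exact stratWithinBudget_defS step
    | defB => exact stratWithinBudget_defB step
    | att | attD | attC | attB => exact hdef.elim

end Strategy

/-- winning budgets at `[p,q]^∧_a` yield strategy conjuncts of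
price at most `e`. -/
theorem win_implies_strategy_formula_conjunct {Proc Act : Type}
    (Tr : Proc → Act → Proc → Prop) (τ : Act) (p q : Proc) (e : Energy)
    (h : (specGame Tr τ).Win (.attC p q) e) :
    ∃ ψ : Conjunct Act τ, StratC Tr τ (.attC p q) e ψ ∧ exprC ψ ≤ e :=
  stratWithinBudget_of_win h

end Spectroscopy
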